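/- arXiv:2303.00100 — 8 statements merged into one kernel-verified Lean document; each statement's English description precedes it below -/
import Mathlib

section
/- Let F be a finite field, Q ∈ F[t] a nonzero polynomial, and T(y) ∈ (F[t]/(Q))[y] a nonzero polynomial of degree at most d. Then the number of roots of T in the quotient ring F[t]/(Q) is at most d·|Q|/lpf(Q), where |Q| = |F|^{deg Q} is the cardinality of F[t]/(Q) and lpf(Q) is the minimum of |F|^{deg P} over monic irreducible factors P of Q. -/
/-!
Lift `T` to `U ∈ F[t][y]`. As `T ≠ 0`, some coefficient of `U` is not divisible by `Q`, so some
prime power `P ^ s` divides `Q` but not that coefficient. Writing `U = P ^ j * W` with `P ∤ W`, we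
get `j < s`, and every root `a` of `T` gives `P ^ s ∣ P ^ j W(a)`, hence `P ∣ W(a)`. So the roots
of `T` lie over the at most `d` roots of the nonzero polynomial `W mod P` over the field
`F[t]/(P)`, and each of these has `|Q| / |P| ≤ |Q| / lpf(Q)` preimages in `F[t]/(Q)`.
-/

/-- `lpf Q` is the size `|F|^(deg P)` of the least monic irreducible factor `P` of `Q`. -/
noncomputable def lpf {F : Type*} [Field F] [Fintype F] (Q : Polynomial F) : ℕ :=
  sInf {n : ℕ | ∃ P : Polynomial F, P.Monic ∧ Irreducible P ∧ P ∣ Q ∧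
    n = Fintype.card F ^ P.natDegree}

open Finset Polynomial

section lpf

variable {F : Type*} [Field F] {P Q : F[X]}

theorem exists_monic_irreducible_dvd_natDegree_eq (hP : Irreducible P) (hPQ : P ∣ Q) :
    ∃ P' : F[X], P'.Monic ∧ Irreducible P' ∧ P' ∣ Q ∧ P'.natDegree = P.natDegree := by
  classical
  have hassoc := associated_normalize P
  exact ⟨normalize P, monic_normalize hP.ne_zero, hassoc.irreducible hP,
    hassoc.symm.dvd.trans hPQ, natDegree_eq_of_degree_eq degree_normalize⟩

variable [Fintype F]

theorem lpf_le_of_irreducible_dvd (hP : Irreducible P) (hPQ : P ∣ Q) :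
    lpf Q ≤ Fintype.card F ^ P.natDegree := by
  obtain ⟨P', hmonic, hirr, hdvd, hdeg⟩ := exists_monic_irreducible_dvd_natDegree_eq hP hPQ
  exact Nat.sInf_le ⟨P', hmonic, hirr, hdvd, by rw [hdeg]⟩

theorem lpf_pos_of_irreducible_dvd (hP : Irreducible P) (hPQ : P ∣ Q) : 0 < lpf Q := by
  obtain ⟨P', hmonic, hirr, hdvd, -⟩ := exists_monic_irreducible_dvd_natDegree_eq hP hPQ
  rw [lpf, Nat.pos_iff_ne_zero, Ne, Nat.sInf_eq_zero, not_or]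
  exact ⟨fun ⟨_, _, _, _, h⟩ ↦ (pow_pos Fintype.card_pos _).ne' h.symm,
    Set.nonempty_iff_ne_empty.mp ⟨_, P', hmonic, hirr, hdvd, rfl⟩⟩

end lpf

theorem natCard_quotient_span_singleton {K : Type*} [Field K] {f : K[X]} (hf : f ≠ 0) :
    Nat.card (K[X] ⧸ Ideal.span {f}) = Nat.card K ^ f.natDegree := by
  have : Module.Finite K (K[X] ⧸ Ideal.span {f}) := (AdjoinRoot.powerBasis hf).finite
  rw [Module.natCard_eq_pow_finrank (K := K), finrank_quotient_span_eq_natDegree]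

theorem UniqueFactorizationMonoid.exists_prime_pow_dvd_not_dvd {R : Type*} [CommMonoidWithZero R]
    [UniqueFactorizationMonoid R] {a b : R} (ha : a ≠ 0) (hab : ¬ a ∣ b) :
    ∃ p : R, Prime p ∧ ∃ n, p ^ n ∣ a ∧ ¬ p ^ n ∣ b := by
  simpa [UniqueFactorizationMonoid.dvd_iff_emultiplicity_le ha,
    emultiplicity_le_emultiplicity_iff] using hab

theorem Polynomial.map_mk_span_singleton_eq_zero_iff {R : Type*} [CommRing R] {a : R}
    {U : R[X]} : U.map (Ideal.Quotient.mk (Ideal.span {a})) = 0 ↔ C a ∣ U := by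
  simp [Polynomial.ext_iff, C_dvd_iff_dvd_coeff, Ideal.Quotient.eq_zero_iff_dvd]

theorem Polynomial.exists_prime_dvd_forall_dvd_eval {R : Type*} [CommRing R] [IsDomain R]
    [UniqueFactorizationMonoid R] {Q : R} (hQ : Q ≠ 0) {U : R[X]} (hU : ¬ C Q ∣ U) :
    ∃ p : R, Prime p ∧ p ∣ Q ∧
      ∃ W : R[X], ¬ C p ∣ W ∧ W ∣ U ∧ ∀ a, Q ∣ U.eval a → p ∣ W.eval a := by
  obtain ⟨i, hi⟩ : ∃ i, ¬ Q ∣ U.coeff i := by simpa [C_dvd_iff_dvd_coeff] using hU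
  obtain ⟨p, hp, s, hpsQ, hpsi⟩ := UniqueFactorizationMonoid.exists_prime_pow_dvd_not_dvd hQ hi
  have hU0 : U ≠ 0 := by rintro rfl; exact hU (dvd_zero _)
  obtain ⟨j, W, hW, rfl⟩ := WfDvdMonoid.max_power_factor hU0 (prime_C_iff.mpr hp).irreducible
  have hjs : j < s := by
    by_contra! hsj
    apply hpsi
    rw [← C_pow, coeff_C_mul]
    exact (pow_dvd_pow p hsj).trans (dvd_mul_right _ _)
  refine ⟨p, hp, (dvd_pow_self p (by omega)).trans hpsQ, W, hW, dvd_mul_left _ _,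
    fun a ha ↦ ?_⟩
  have : p ^ j * p ∣ p ^ j * W.eval a := by
    rw [← pow_succ]
    simpa [eval_mul] using (pow_dvd_pow p hjs).trans (hpsQ.trans ha)
  exact (mul_dvd_mul_iff_left (pow_ne_zero j hp.ne_zero)).mp this

theorem Polynomial.exists_prime_dvd_ne_zero_eval_factor_eq_zero {R : Type*} [CommRing R]
    [IsDomain R] [UniqueFactorizationMonoid R] {Q : R} (hQ : Q ≠ 0) {T : (R ⧸ Ideal.span {Q})[X]}
    (hT : T ≠ 0) :
    ∃ p : R, Prime p ∧ ∃ hpQ : p ∣ Q, ∃ W : (R ⧸ Ideal.span {p})[X], W ≠ 0 ∧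
      W.natDegree ≤ T.natDegree ∧ ∀ y, T.eval y = 0 →
        W.eval (Ideal.Quotient.factor (Ideal.span_singleton_le_span_singleton.mpr hpQ) y) = 0 := by
  obtain ⟨U, hUT, hUdeg⟩ :=
    exists_natDegree_eq_of_mem_lifts (mem_lifts_of_surjective Ideal.Quotient.mk_surjective T)
  have hQU : ¬ C Q ∣ U := by rwa [← map_mk_span_singleton_eq_zero_iff, hUT]
  obtain ⟨p, hp, hpQ, W, hW, hWU, hdvd⟩ := exists_prime_dvd_forall_dvd_eval hQ hQU
  have hU0 : U ≠ 0 := by rintro rfl; exact hQU (dvd_zero _)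
  refine ⟨p, hp, hpQ, W.map (Ideal.Quotient.mk _), map_mk_span_singleton_eq_zero_iff.not.mpr hW,
    natDegree_map_le.trans ((natDegree_le_of_dvd hWU hU0).trans hUdeg.le), fun y hy ↦ ?_⟩
  obtain ⟨a, rfl⟩ := Ideal.Quotient.mk_surjective y
  rw [← hUT, eval_map, eval₂_hom, Ideal.Quotient.eq_zero_iff_dvd] at hy
  rw [Ideal.Quotient.factor_mk, eval_map, eval₂_hom, Ideal.Quotient.eq_zero_iff_dvd]
  exact hdvd a hy

theorem AddMonoidHom.card_filter_mem_mul_card {G H : Type*} [AddGroup G] [Fintype G]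
    [AddGroup H] [Fintype H] [DecidableEq H] (φ : G →+ H) (hφ : Function.Surjective φ)
    (s : Finset H) :
    #{g | φ g ∈ s} * Fintype.card H = #s * Fintype.card G := by
  have hfiber (t : Finset H) : #{g | φ g ∈ t} = #t * #{g | φ g = 0} := by
    rw [← Finset.sum_card_fiberwise_eq_card_filter,
      Finset.sum_const_nat fun z _ ↦ card_fiber_eq_of_mem_range φ (hφ z) (hφ 0)]
  have hG := hfiber Finset.univ
  simp only [Finset.mem_univ, Finset.filter_true, Finset.card_univ] at hG
  rw [hfiber, hG]
  ring

theorem natCard_eval_map_eq_zero_mul_le {R S : Type*} [CommRing R] [Finite R] [CommRing S]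
    [IsDomain S] (φ : R →+* S) (hφ : Function.Surjective φ) {W : S[X]} (hW : W ≠ 0) :
    Nat.card {y : R // W.eval (φ y) = 0} * Nat.card S ≤ W.natDegree * Nat.card R := by
  classical
  have := Fintype.ofFinite R
  have : Finite S := Finite.of_surjective φ hφ
  have := Fintype.ofFinite S
  have hroots : #{y | W.eval (φ y) = 0} = #{y | φ.toAddMonoidHom y ∈ W.roots.toFinset} := by
    simp [mem_roots hW]
  rw [Nat.card_eq_fintype_card, Fintype.card_subtype, Nat.card_eq_fintype_card,
    Nat.card_eq_fintype_card, hroots, φ.toAddMonoidHom.card_filter_mem_mul_card hφ]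
  exact Nat.mul_le_mul_right _ (W.roots.toFinset_card_le.trans (card_roots' W))

theorem stmt_2 {F : Type*} [Field F] [Fintype F] (Q : Polynomial F) (hQ : Q ≠ 0)
    (d : ℕ) (T : Polynomial (Polynomial F ⧸ Ideal.span {Q})) (hT : T ≠ 0)
    (hdeg : T.natDegree ≤ d) :
    (Nat.card {y : Polynomial F ⧸ Ideal.span {Q} // Polynomial.eval y T = 0} : ℝ) ≤
      (d : ℝ) * (Fintype.card F ^ Q.natDegree : ℝ) / (lpf Q : ℝ) := by
  obtain ⟨p, hp, hpQ, W, hW, hWdeg, hroots⟩ :=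
    exists_prime_dvd_ne_zero_eval_factor_eq_zero hQ hT
  have : (Ideal.span {p}).IsPrime := (Ideal.span_singleton_prime hp.ne_zero).mpr hp
  have hcardQ := natCard_quotient_span_singleton hQ
  have hcardp := natCard_quotient_span_singleton hp.ne_zero
  rw [Nat.card_eq_fintype_card (α := F)] at hcardQ hcardp
  have : Finite (F[X] ⧸ Ideal.span {Q}) :=
    Nat.finite_of_card_ne_zero (hcardQ ▸ (pow_pos Fintype.card_pos _).ne')
  set φ := Ideal.Quotient.factor (Ideal.span_singleton_le_span_singleton.mpr hpQ)
  have hcount := natCard_eval_map_eq_zero_mul_le φ (Ideal.Quotient.factor_surjective _) hW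
  have hsub := Nat.card_le_card_of_injective _ (Subtype.impEmbedding _ _ hroots).injective
  have hlpf := lpf_le_of_irreducible_dvd hp.irreducible hpQ
  rw [le_div_iff₀ (by exact_mod_cast lpf_pos_of_irreducible_dvd hp.irreducible hpQ)]
  exact_mod_cast calc
    Nat.card {y // T.eval y = 0} * lpf Q
      ≤ Nat.card {y // W.eval (φ y) = 0} * Nat.card (F[X] ⧸ Ideal.span {p}) :=
        Nat.mul_le_mul hsub (hcardp ▸ hlpf)
    _ ≤ W.natDegree * Nat.card (F[X] ⧸ Ideal.span {Q}) := hcount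
    _ ≤ d * Fintype.card F ^ Q.natDegree := hcardQ ▸ Nat.mul_le_mul_right _ (hWdeg.trans hdeg)
end

section
/- Let F be a finite field, Q ∈ F[t] monic nonconstant, and m ∈ F[t] a monic irreducible factor of Q. Then there exists a function f : F[t]/(Q) → ℂ with |f| ≡ 1 such that 𝔼_{y∈F[t]/(Q)} f(x + m·y) = f(x) for every x ∈ F[t]/(Q), while 𝔼_{z∈F[t]/(Q)} f(z) = 0. In particular the L²-norm of x ↦ 𝔼_y f(x+my) − 𝔼_z f(z) equals 1. -/
/-!
If `m` were invertible modulo `Q`, then `m ∣ Q` would force `m ∣ 1`; so `R = F[t]/(Q)` modulo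
the image of `m` is a nonzero finite ring, whose additive group carries a nontrivial character `χ`.
Its pullback `ψ` to `R` is a nontrivial character, constant on the cosets of `m R`: averaging
over `x + m y` leaves `ψ x` unchanged, while the full average of `ψ` vanishes by orthogonality.
-/

lemma Fintype.sum_const_div_card {α K : Type*} [Fintype α] [Nonempty α] [Semifield K]
    [CharZero K] (c : K) : (∑ _x : α, c) / Fintype.card α = c := by
  rw [Finset.sum_const, Finset.card_univ, nsmul_eq_mul,
    mul_div_cancel_left₀ c (Nat.cast_ne_zero.2 Fintype.card_ne_zero)]

lemma isUnit_of_isUnit_mk_span_singleton {R : Type*} [CommRing R] {a b : R} (hab : a ∣ b)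
    (h : IsUnit (Ideal.Quotient.mk (Ideal.span {b}) a)) : IsUnit a := by
  obtain ⟨u, hu⟩ := isUnit_iff_exists_inv.1 h
  obtain ⟨p, rfl⟩ := Ideal.Quotient.mk_surjective u
  rw [← map_mul, ← map_one (Ideal.Quotient.mk _), Ideal.Quotient.eq,
    Ideal.mem_span_singleton] at hu
  exact isUnit_of_dvd_one <| (dvd_sub_right (dvd_mul_right a p)).1 (hab.trans hu)

lemma AddChar.exists_ne_one_forall_add_mul_eq {R : Type*} [CommRing R] [Finite R] {a : R}
    (ha : ¬IsUnit a) : ∃ ψ : AddChar R ℂ, ψ ≠ 1 ∧ ∀ x y, ψ (x + a * y) = ψ x := by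
  have : Nontrivial (R ⧸ Ideal.span {a}) :=
    Ideal.Quotient.nontrivial_iff.2 (by rwa [Ne, Ideal.span_singleton_eq_top])
  have : Finite (R ⧸ Ideal.span {a}) := Finite.of_surjective _ Ideal.Quotient.mk_surjective
  obtain ⟨χ, hχ⟩ := AddChar.exists_apply_ne_zero.2 (one_ne_zero : (1 : R ⧸ Ideal.span {a}) ≠ 0)
  refine ⟨χ.compAddMonoidHom (Ideal.Quotient.mk _).toAddMonoidHom, fun h ↦ hχ ?_, fun x y ↦ ?_⟩
  · simpa using DFunLike.congr_fun h 1
  · have : Ideal.Quotient.mk (Ideal.span {a}) (a * y) = 0 :=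
      Ideal.Quotient.eq_zero_iff_mem.2 (Ideal.mem_span_singleton.2 (dvd_mul_right a y))
    simp [this]

theorem stmt_5_general {F : Type*} [Field F] (Q m : Polynomial F)
    (hirr : Irreducible m) (hdvd : m ∣ Q)
    [Fintype (Polynomial F ⧸ Ideal.span {Q})] :
    ∃ f : (Polynomial F ⧸ Ideal.span {Q}) → ℂ,
      (∀ x, ‖f x‖ = 1) ∧
      (∀ x : Polynomial F ⧸ Ideal.span {Q},
        (∑ y : Polynomial F ⧸ Ideal.span {Q},
            f (x + Ideal.Quotient.mk (Ideal.span {Q}) m * y)) /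
          (Fintype.card (Polynomial F ⧸ Ideal.span {Q}) : ℂ) = f x) ∧
      (∑ z : Polynomial F ⧸ Ideal.span {Q}, f z) /
          (Fintype.card (Polynomial F ⧸ Ideal.span {Q}) : ℂ) = 0 ∧
      (∑ x : Polynomial F ⧸ Ideal.span {Q},
          ‖(∑ y : Polynomial F ⧸ Ideal.span {Q},
              f (x + Ideal.Quotient.mk (Ideal.span {Q}) m * y)) /
            (Fintype.card (Polynomial F ⧸ Ideal.span {Q}) : ℂ) -
            (∑ z : Polynomial F ⧸ Ideal.span {Q}, f z) /
              (Fintype.card (Polynomial F ⧸ Ideal.span {Q}) : ℂ)‖ ^ 2) /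
        (Fintype.card (Polynomial F ⧸ Ideal.span {Q}) : ℝ) = 1 := by
  obtain ⟨ψ, hψ, hψ_add_mul⟩ := AddChar.exists_ne_one_forall_add_mul_eq
    (a := Ideal.Quotient.mk (Ideal.span {Q}) m)
    fun h ↦ hirr.not_isUnit (isUnit_of_isUnit_mk_span_singleton hdvd h)
  have h_avg_shift : ∀ x, (∑ y, ψ (x + Ideal.Quotient.mk (Ideal.span {Q}) m * y)) /
      (Fintype.card (Polynomial F ⧸ Ideal.span {Q}) : ℂ) = ψ x := fun x ↦ by
    simp only [hψ_add_mul, Fintype.sum_const_div_card]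
  have h_avg : (∑ z, ψ z) / (Fintype.card (Polynomial F ⧸ Ideal.span {Q}) : ℂ) = 0 := by
    rw [AddChar.sum_eq_zero_of_ne_one hψ, zero_div]
  refine ⟨ψ, ψ.norm_apply, h_avg_shift, h_avg, ?_⟩
  simp only [h_avg_shift, h_avg, sub_zero, AddChar.norm_apply, one_pow,
    Fintype.sum_const_div_card]

theorem stmt_5 {F : Type*} [Field F] [Fintype F] (Q m : Polynomial F) (hQ : Q.Monic)
    (hQ0 : 0 < Q.natDegree) (hm : m.Monic) (hirr : Irreducible m) (hdvd : m ∣ Q)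
    [Fintype (Polynomial F ⧸ Ideal.span {Q})] :
    ∃ f : (Polynomial F ⧸ Ideal.span {Q}) → ℂ,
      (∀ x, ‖f x‖ = 1) ∧
      (∀ x : Polynomial F ⧸ Ideal.span {Q},
        (∑ y : Polynomial F ⧸ Ideal.span {Q},
            f (x + Ideal.Quotient.mk (Ideal.span {Q}) m * y)) /
          (Fintype.card (Polynomial F ⧸ Ideal.span {Q}) : ℂ) = f x) ∧
      (∑ z : Polynomial F ⧸ Ideal.span {Q}, f z) /
          (Fintype.card (Polynomial F ⧸ Ideal.span {Q}) : ℂ) = 0 ∧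
      (∑ x : Polynomial F ⧸ Ideal.span {Q},
          ‖(∑ y : Polynomial F ⧸ Ideal.span {Q},
              f (x + Ideal.Quotient.mk (Ideal.span {Q}) m * y)) /
            (Fintype.card (Polynomial F ⧸ Ideal.span {Q}) : ℂ) -
            (∑ z : Polynomial F ⧸ Ideal.span {Q}, f z) /
              (Fintype.card (Polynomial F ⧸ Ideal.span {Q}) : ℂ)‖ ^ 2) /
        (Fintype.card (Polynomial F ⧸ Ideal.span {Q}) : ℝ) = 1 :=
  stmt_5_general Q m hirr hdvd
end

section
/- Let p be prime and let r = ∑_{i=0}^n a_i p^i with digits a_i ∈ {0,…,p−1}. Then in characteristic p, the derivational degree of the monomial y^r equals ∑_{i=0}^n a_i. In particular, d-deg(y^p) = 1 and, for p ∤ r with r having base-p digit sum s, the (s+1)-fold discrete difference ∂_{u₁,…,u_{s+1}}(y^r) vanishes identically while the s-fold difference does not. -/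
/-- Iterated additive differencing: `iterD f k u = ∂_{u₁,…,u_k} f`,
where `∂_v f (x) = f (x + v) - f x` and the last difference is applied outermost. -/
def iterD {K : Type*} [AddGroup K] (f : K → K) : (k : ℕ) → (Fin k → K) → K → K
  | 0, _ => f
  | k + 1, u => fun x =>
      iterD f k (fun i => u i.castSucc) (x + u (Fin.last k)) -
        iterD f k (fun i => u i.castSucc) x

/-- The derivational degree of `f`: the minimal `d ≥ 0` such that all `(d+1)`-fold
differences of `f` vanish identically. -/
noncomputable def ddeg {K : Type*} [AddGroup K] (f : K → K) : ℕ :=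
  sInf {d : ℕ | ∀ (u : Fin (d + 1) → K) (x : K), iterD f (d + 1) u x = 0}

/-!
The upper bound is an induction on the number of differences, carried out on polynomials: by
Kummer's theorem, `(X + a)^i - X^i` only involves monomials `X^j` with `p ∤ choose i j`, and these
have strictly smaller base-`p` digit sum than `i`. For the lower bound, induct on `r`: if `p ∣ r`
then `y^r = (y^(r/p))^p` and differences commute with Frobenius; if `p ∤ r`, the derivative of
`y^r` is the unit `r` times `y^(r-1)`, whose digit sum is one less, and a polynomial with nonzero
derivative is not constant on an infinite field, so one more difference survives.
-/

open Polynomial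

namespace Nat

variable {b : ℕ}

theorem digits_sum_pos {n : ℕ} (hn : n ≠ 0) : 0 < (b.digits n).sum :=
  (Nat.pos_of_ne_zero (getLast_digit_ne_zero b hn)).trans_le
    (List.le_sum_of_mem (List.getLast_mem _))

theorem digits_sum_add_base_mul (hb : 1 < b) {x : ℕ} (hx : x < b) (y : ℕ) :
    (b.digits (x + b * y)).sum = x + (b.digits y).sum := by
  by_cases hxy : x ≠ 0 ∨ y ≠ 0
  · simp [digits_add b hb x y hx hxy]
  · obtain ⟨rfl, rfl⟩ : x = 0 ∧ y = 0 := by tauto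
    simp

theorem digits_sum_base_mul (hb : 1 < b) (n : ℕ) :
    (b.digits (b * n)).sum = (b.digits n).sum := by
  simpa using digits_sum_add_base_mul hb (zero_lt_of_lt hb) n

theorem digits_sum_eq_sub_one_add_one (hb : 1 < b) {n : ℕ} (hn : ¬ b ∣ n) :
    (b.digits n).sum = (b.digits (n - 1)).sum + 1 := by
  have hmod : n % b ≠ 0 := fun h => hn (dvd_of_mod_eq_zero h)
  have hlt := mod_lt n (zero_lt_of_lt hb)
  have hdiv := mod_add_div n b
  rw [← hdiv, show n % b + b * (n / b) - 1 = (n % b - 1) + b * (n / b) by omega,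
    digits_sum_add_base_mul hb hlt, digits_sum_add_base_mul hb (by omega)]
  omega

theorem digits_sum_lt_of_not_dvd_choose {p : ℕ} [Fact p.Prime] {i j : ℕ} (hji : j < i)
    (h : ¬ p ∣ i.choose j) : (p.digits j).sum < (p.digits i).sum := by
  have hkummer := sub_one_mul_padicValNat_choose_eq_sub_sum_digits (p := p) hji.le
  rw [padicValNat.eq_zero_of_not_dvd h, mul_zero] at hkummer
  have := digits_sum_pos (b := p) (Nat.sub_ne_zero_of_lt hji)
  omega

end Nat

section IterD

variable {K : Type*}

theorem iterD_eq_zero_of_le [AddGroup K] {f : K → K} {k l : ℕ} (hkl : k ≤ l)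
    (hf : ∀ u x, iterD f k u x = 0) : ∀ u x, iterD f l u x = 0 := by
  induction l, hkl using Nat.le_induction with
  | base => exact hf
  | succ l _ ih => intro u x; simp only [iterD, ih, sub_self]

theorem ddeg_eq_of_iterD [AddGroup K] {f : K → K} {d : ℕ}
    (hvanish : ∀ u x, iterD f (d + 1) u x = 0) (hne : ∃ u x, iterD f d u x ≠ 0) :
    ddeg f = d := by
  refine le_antisymm (Nat.sInf_le hvanish) (le_csInf ⟨d, hvanish⟩ fun m hm => ?_)
  by_contra! hlt
  obtain ⟨u, x, h⟩ := hne
  exact h (iterD_eq_zero_of_le hlt hm u x)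

theorem iterD_pow_char (p : ℕ) [Fact p.Prime] [CommRing K] [CharP K p] (f : K → K) :
    ∀ (k : ℕ) (u : Fin k → K) (x : K), iterD (fun y => f y ^ p) k u x = iterD f k u x ^ p
  | 0, _, _ => rfl
  | k + 1, u, x => by simp only [iterD, iterD_pow_char p f k, sub_pow_char]

end IterD

section PolyIterD

variable {R : Type*} [CommRing R]

noncomputable def polyIterD (P : R[X]) : (k : ℕ) → (Fin k → R) → R[X]
  | 0, _ => P
  | k + 1, u =>
      taylor (u (Fin.last k)) (polyIterD P k (fun i => u i.castSucc)) -
        polyIterD P k (fun i => u i.castSucc)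

theorem eval_polyIterD (P : R[X]) :
    ∀ (k : ℕ) (u : Fin k → R) (x : R), (polyIterD P k u).eval x = iterD (P.eval ·) k u x
  | 0, _, _ => rfl
  | k + 1, u, x => by simp only [polyIterD, iterD, eval_sub, taylor_eval, eval_polyIterD P k]

theorem derivative_polyIterD (P : R[X]) :
    ∀ (k : ℕ) (u : Fin k → R), derivative (polyIterD P k u) = polyIterD (derivative P) k u
  | 0, _ => rfl
  | k + 1, u => by
    simp only [polyIterD, derivative_sub, taylor_apply, derivative_comp, derivative_add,
      derivative_X, derivative_C, add_zero, one_mul, derivative_polyIterD P k]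

theorem polyIterD_C_mul (c : R) (P : R[X]) :
    ∀ (k : ℕ) (u : Fin k → R), polyIterD (C c * P) k u = C c * polyIterD P k u
  | 0, _ => rfl
  | k + 1, u => by simp only [polyIterD, polyIterD_C_mul c P k, taylor_mul, taylor_C, mul_sub]

end PolyIterD

section DigitSupport

variable {R : Type*} [CommRing R] (p : ℕ) [Fact p.Prime] [CharP R p]

theorem exists_digits_sum_lt_of_mem_support_taylor_sub {P : R[X]} {a : R} {j : ℕ}
    (hj : j ∈ (taylor a P - P).support) :
    ∃ i ∈ P.support, (p.digits j).sum < (p.digits i).sum := by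
  by_contra! hP
  suffices hasseDeriv j P = C (P.coeff j) by
    simp [taylor_coeff, this] at hj
  ext n
  rw [hasseDeriv_coeff, coeff_C]
  rcases n.eq_zero_or_pos with rfl | hn
  · simp
  rw [if_neg hn.ne']
  by_cases hs : n + j ∈ P.support
  · have hchoose : p ∣ (n + j).choose j := by
      by_contra hnd
      exact (hP _ hs).not_gt (Nat.digits_sum_lt_of_not_dvd_choose (by omega) hnd)
    rw [(CharP.cast_eq_zero_iff R p _).mpr hchoose, zero_mul]
  · rw [notMem_support_iff.mp hs, mul_zero]

theorem digits_sum_lt_of_mem_support_polyIterD {P : R[X]} {m k : ℕ}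
    (hP : ∀ i ∈ P.support, (p.digits i).sum < m + k) (u : Fin k → R) {j : ℕ}
    (hj : j ∈ (polyIterD P k u).support) : (p.digits j).sum < m := by
  induction k generalizing m j with
  | zero => exact hP j hj
  | succ k ih =>
    obtain ⟨i, hi, hji⟩ := exists_digits_sum_lt_of_mem_support_taylor_sub p hj
    have := ih (m := m + 1) (fun i hi => by have := hP i hi; omega) _ hi
    omega

theorem iterD_pow_digits_sum_succ_eq_zero (r : ℕ) (u : Fin ((p.digits r).sum + 1) → R)
    (x : R) :
    iterD (fun y : R => y ^ r) ((p.digits r).sum + 1) u x = 0 := by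
  have hzero : polyIterD (X ^ r) _ u = 0 := by
    refine support_eq_empty.mp (Finset.eq_empty_of_forall_notMem fun j hj => ?_)
    refine (digits_sum_lt_of_mem_support_polyIterD p (m := 0) (fun i hi => ?_) u hj).not_ge
      (Nat.zero_le _)
    obtain rfl : i = r := by_contra fun h => mem_support_iff.mp hi (by simp [coeff_X_pow, h])
    omega
  simpa [eval_polyIterD] using congr_arg (eval x) hzero

end DigitSupport

section Nonvanishing

variable {R : Type*} [CommRing R] [IsDomain R] [Infinite R]

theorem exists_iterD_succ_ne_zero_of_derivative {P : R[X]} {k : ℕ} {w : Fin k → R} {x : R}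
    (h : (polyIterD (derivative P) k w).eval x ≠ 0) :
    ∃ u y, iterD (P.eval ·) (k + 1) u y ≠ 0 := by
  set g := polyIterD P k w with hg_def
  have hg : g ≠ C (g.eval 0) := by
    intro hg
    apply h
    rw [← derivative_polyIterD, ← hg_def, hg, derivative_C, eval_zero]
  obtain ⟨a, ha⟩ : ∃ a, g.eval a ≠ g.eval 0 := by
    by_contra! h'
    exact hg (Polynomial.funext fun a => by simpa using h' a)
  refine ⟨Fin.snoc w a, 0, ?_⟩
  simpa [g, iterD, eval_polyIterD, sub_eq_zero] using ha

theorem exists_iterD_pow_ne_zero (p : ℕ) [Fact p.Prime] [CharP R p] (r : ℕ) :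
    ∃ u x, iterD (fun y : R => y ^ r) (p.digits r).sum u x ≠ 0 := by
  have hp := (Fact.out : p.Prime).one_lt
  induction r using Nat.strong_induction_on with
  | _ r ih =>
    rcases Nat.eq_zero_or_pos r with rfl | hr
    · rw [Nat.digits_zero, List.sum_nil]
      exact ⟨Fin.elim0, 0, by simp [iterD]⟩
    by_cases hpr : p ∣ r
    · obtain ⟨q, rfl⟩ := hpr
      have hq : 0 < q := Nat.pos_of_mul_pos_left hr
      obtain ⟨u, x, h⟩ := ih q (lt_mul_left hq hp)
      rw [Nat.digits_sum_base_mul hp]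
      refine ⟨u, x, ?_⟩
      simp_rw [pow_mul']
      rw [iterD_pow_char p (· ^ q)]
      exact pow_ne_zero _ h
    · obtain ⟨w, x, h⟩ := ih (r - 1) (by omega)
      rw [Nat.digits_sum_eq_sub_one_add_one hp hpr]
      have hr' : (r : R) ≠ 0 := fun h0 => hpr ((CharP.cast_eq_zero_iff R p r).mp h0)
      simpa using exists_iterD_succ_ne_zero_of_derivative (P := X ^ r) (w := w) (x := x) (by
        rw [derivative_X_pow, polyIterD_C_mul, eval_mul, eval_C, eval_polyIterD]
        simpa [hr'] using h)

end Nonvanishing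

theorem stmt_7 (p : ℕ) [Fact p.Prime] (K : Type*) [Field K] [CharP K p] [Infinite K]
    (r : ℕ) :
    ddeg (fun y : K => y ^ r) = (Nat.digits p r).sum ∧
    ddeg (fun y : K => y ^ p) = 1 := by
  have hddeg (n : ℕ) : ddeg (fun y : K => y ^ n) = (p.digits n).sum :=
    ddeg_eq_of_iterD (iterD_pow_digits_sum_succ_eq_zero p n) (exists_iterD_pow_ne_zero p n)
  refine ⟨hddeg r, ?_⟩
  have hp := (Fact.out : p.Prime).one_lt
  rw [hddeg]
  simpa [Nat.digits_of_lt p 1 one_ne_zero hp] using Nat.digits_sum_base_mul hp 1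
end

section
/- Let 𝔽_p be the prime field of characteristic p, and let η₁, η₂ ∈ 𝔽_p[y] be additive polynomials. Then there exist additive polynomials ζ₁, ζ₂ ∈ 𝔽_p[y] such that the additive polynomial η := η₁∘ζ₁ + η₂∘ζ₂ satisfies η(𝔽_p[t]) = η₁(𝔽_p[t]) + η₂(𝔽_p[t]) as subgroups of (𝔽_p[t], +). -/
open Polynomial

/-- A polynomial over `𝔽_p` is additive if it is an `𝔽_p`-linear combination of
Frobenius powers `y^(p^i)`. -/
def IsAdditivePoly (p : ℕ) (P : Polynomial (ZMod p)) : Prop :=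
  ∃ (n : ℕ) (a : Fin n → ZMod p),
    P = ∑ i : Fin n, Polynomial.C (a i) * Polynomial.X ^ p ^ (i : ℕ)

noncomputable def Tadd (p : ℕ) (F : Polynomial (ZMod p)) : Polynomial (ZMod p) :=
  F.sum fun i a => C a * X ^ p ^ i

lemma pow_card_pow (p : ℕ) [Fact p.Prime] (a : ZMod p) (n : ℕ) : a ^ p ^ n = a := by
  induction n with
  | zero => simp
  | succ n ih => rw [pow_succ, pow_mul, ih, ZMod.pow_card]

lemma Tadd_monomial (p : ℕ) (n : ℕ) (a : ZMod p) :
    Tadd p (monomial n a) = C a * X ^ p ^ n := by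
  unfold Tadd
  rw [Polynomial.sum_monomial_index]
  simp

lemma Tadd_add (p : ℕ) (F G : Polynomial (ZMod p)) :
    Tadd p (F + G) = Tadd p F + Tadd p G := by
  unfold Tadd
  rw [Polynomial.sum_add_index] <;> intros <;> simp [add_mul]

lemma Tadd_monomial_mul (p : ℕ) [Fact p.Prime] (n : ℕ) (a : ZMod p)
    (G : Polynomial (ZMod p)) :
    Tadd p (monomial n a * G) = C a * (Tadd p G) ^ p ^ n := by
  induction G using Polynomial.induction_on' with
  | add q r hq hr =>
    rw [mul_add, Tadd_add, hq, hr, Tadd_add, add_pow_char_pow, mul_add]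
  | monomial m b =>
    rw [monomial_mul_monomial, Tadd_monomial, Tadd_monomial, mul_pow, ← C_pow,
      pow_card_pow, ← pow_mul, map_mul, ← pow_add]
    ring_nf

lemma Tadd_mul (p : ℕ) [Fact p.Prime] (F G : Polynomial (ZMod p)) :
    Tadd p (F * G) = (Tadd p F).comp (Tadd p G) := by
  induction F using Polynomial.induction_on' with
  | add q r hq hr => rw [add_mul, Tadd_add, hq, hr, Tadd_add, add_comp]
  | monomial m b => rw [Tadd_monomial_mul, Tadd_monomial]; simp

lemma aeval_Tadd_add (p : ℕ) [Fact p.Prime] (F : Polynomial (ZMod p))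
    (x y : Polynomial (ZMod p)) :
    aeval (x + y) (Tadd p F) = aeval x (Tadd p F) + aeval y (Tadd p F) := by
  induction F using Polynomial.induction_on' with
  | add q r hq hr => rw [Tadd_add, map_add, map_add, map_add, hq, hr]; ring
  | monomial m b =>
    rw [Tadd_monomial]
    simp [add_pow_char_pow, mul_add]

lemma isAdditive_Tadd (p : ℕ) (F : Polynomial (ZMod p)) :
    IsAdditivePoly p (Tadd p F) := by
  refine ⟨F.natDegree + 1, fun i => F.coeff i, ?_⟩
  unfold Tadd
  rw [← Polynomial.sum_fin (fun i a => C a * X ^ p ^ i) (by intro i; simp)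
    (lt_of_le_of_lt F.degree_le_natDegree (by exact_mod_cast lt_add_one F.natDegree))]

lemma exists_Tadd (p : ℕ) (η : Polynomial (ZMod p)) (h : IsAdditivePoly p η) :
    ∃ F, Tadd p F = η := by
  obtain ⟨n, a, rfl⟩ := h
  refine ⟨∑ i : Fin n, monomial (i : ℕ) (a i), ?_⟩
  have hsum : ∀ (s : Finset (Fin n)), Tadd p (∑ i ∈ s, monomial (i : ℕ) (a i)) =
      ∑ i ∈ s, C (a i) * X ^ p ^ (i : ℕ) := by
    intro s
    induction s using Finset.induction_on with
    | empty => simp [Tadd]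
    | @insert j s hj ih => rw [Finset.sum_insert hj, Tadd_add, ih,
        Tadd_monomial, Finset.sum_insert hj]
  exact hsum Finset.univ

theorem stmt_8 (p : ℕ) [Fact p.Prime] (η₁ η₂ : Polynomial (ZMod p))
    (h₁ : IsAdditivePoly p η₁) (h₂ : IsAdditivePoly p η₂) :
    ∃ ζ₁ ζ₂ : Polynomial (ZMod p), IsAdditivePoly p ζ₁ ∧ IsAdditivePoly p ζ₂ ∧
      Set.range (fun x : Polynomial (ZMod p) =>
          Polynomial.aeval x (η₁.comp ζ₁ + η₂.comp ζ₂)) =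
        {z : Polynomial (ZMod p) | ∃ x y : Polynomial (ZMod p),
          z = Polynomial.aeval x η₁ + Polynomial.aeval y η₂} := by
  obtain ⟨F₁, rfl⟩ := exists_Tadd p η₁ h₁
  obtain ⟨F₂, rfl⟩ := exists_Tadd p η₂ h₂
  set d := EuclideanDomain.gcd F₁ F₂ with hd
  obtain ⟨g₁, hg₁⟩ : d ∣ F₁ := EuclideanDomain.gcd_dvd_left F₁ F₂
  obtain ⟨g₂, hg₂⟩ : d ∣ F₂ := EuclideanDomain.gcd_dvd_right F₁ F₂
  have hbez : d = F₁ * EuclideanDomain.gcdA F₁ F₂ + F₂ * EuclideanDomain.gcdB F₁ F₂ :=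
    EuclideanDomain.gcd_eq_gcd_ab F₁ F₂
  refine ⟨Tadd p (EuclideanDomain.gcdA F₁ F₂), Tadd p (EuclideanDomain.gcdB F₁ F₂),
    isAdditive_Tadd p _, isAdditive_Tadd p _, ?_⟩
  have hcomp : (Tadd p F₁).comp (Tadd p (EuclideanDomain.gcdA F₁ F₂)) +
      (Tadd p F₂).comp (Tadd p (EuclideanDomain.gcdB F₁ F₂)) = Tadd p d := by
    rw [← Tadd_mul, ← Tadd_mul, ← Tadd_add, ← hbez]
  rw [hcomp]
  ext z
  constructor
  · rintro ⟨x, rfl⟩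
    refine ⟨aeval x (Tadd p (EuclideanDomain.gcdA F₁ F₂)),
      aeval x (Tadd p (EuclideanDomain.gcdB F₁ F₂)), ?_⟩
    simp only []
    conv_lhs => rw [hbez, Tadd_add, Tadd_mul, Tadd_mul, map_add, aeval_comp, aeval_comp]
  · rintro ⟨x, y, rfl⟩
    refine ⟨aeval x (Tadd p g₁) + aeval y (Tadd p g₂), ?_⟩
    simp only []
    rw [aeval_Tadd_add, hg₁, hg₂, Tadd_mul, Tadd_mul, aeval_comp, aeval_comp]
end

section
/- Let F be a finite field of characteristic p and η(y) = ∑_{i=0}^k a_i y^{p^i} ∈ (F[t])[y] an additive polynomial with a_k ≠ 0 and k ≥ 1 and a_0 ≠ 0. Write η(y) = y·g(y) with g(y) = a_0 + ∑_{i=1}^k a_i y^{p^i−1}. Then the set of monic irreducible Q ∈ F[t] such that g has a root modulo Q is infinite. -/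
/-!
Euclid's argument in `K[t]`. Let `f ∈ K[t][y]` be nonconstant with `c := f(0) ≠ 0` and let `P` be
the product of finitely many given irreducibles, times a high power of `t`. Then `c P` divides
`f(c P) - c`, so `f(c P) = c v` with `v ≡ 1 mod P`; for `deg P` large the leading term of `f` makes
`v` nonconstant, so `v` has an irreducible factor, and it is none of the given ones.
-/

open Polynomial Finset

namespace Polynomial

theorem natDegree_eval_of_natDegree_coeff_lt {R : Type*} [Semiring R] [NoZeroDivisors R]
    (f : R[X][X]) {y : R[X]} (h : ∀ i, (f.coeff i).natDegree < y.natDegree) :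
    (f.eval y).natDegree = f.leadingCoeff.natDegree + f.natDegree * y.natDegree := by
  rcases Nat.eq_zero_or_pos f.natDegree with hn | hn
  · rw [eq_C_of_natDegree_eq_zero hn]
    simp
  have hf : f ≠ 0 := ne_zero_of_natDegree_gt hn
  have hy : y ≠ 0 := by
    rintro rfl
    simpa using h 0
  have htop : (f.leadingCoeff * y ^ f.natDegree).natDegree =
      f.leadingCoeff.natDegree + f.natDegree * y.natDegree := by
    rw [natDegree_mul (leadingCoeff_ne_zero.2 hf) (pow_ne_zero _ hy), natDegree_pow]
  have hlow : (∑ i ∈ range f.natDegree, f.coeff i * y ^ i).natDegree ≤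
      f.natDegree * y.natDegree - 1 := by
    refine natDegree_sum_le_of_forall_le _ _ fun i hi => ?_
    have hterm := (natDegree_mul_le (p := f.coeff i) (q := y ^ i)).trans
      (Nat.add_le_add_left (natDegree_pow_le (p := y) (n := i)) _)
    have hi : (i + 1) * y.natDegree ≤ f.natDegree * y.natDegree :=
      Nat.mul_le_mul_right _ (mem_range.1 hi)
    have hci := h i
    rw [add_one_mul] at hi
    omega
  have hpos : 0 < f.natDegree * y.natDegree := Nat.mul_pos hn ((Nat.zero_le _).trans_lt (h 0))
  rw [eval_eq_sum_range, sum_range_succ, ← leadingCoeff, natDegree_add_eq_right_of_natDegree_lt,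
    htop]
  omega

theorem exists_natDegree_coeff_lt {R : Type*} [Semiring R] (f : R[X][X]) :
    ∃ m, ∀ i, (f.coeff i).natDegree < m := by
  refine ⟨(range (f.natDegree + 1)).sup (fun i => (f.coeff i).natDegree) + 1, fun i => ?_⟩
  by_cases hi : i ≤ f.natDegree
  · exact Nat.lt_succ_of_le (le_sup (f := fun i => (f.coeff i).natDegree)
      (mem_range.2 (Nat.lt_succ_of_le hi)))
  · rw [coeff_eq_zero_of_natDegree_lt (not_le.1 hi)]
    simp

theorem coeff_sum_C_mul_X_pow_of_injOn {R ι : Type*} [Semiring R] {s : Finset ι} {e : ι → ℕ}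
    (he : Set.InjOn e s) (a : ι → R) {j : ι} (hj : j ∈ s) :
    (∑ i ∈ s, C (a i) * X ^ e i).coeff (e j) = a j := by
  rw [finsetSum_coeff, sum_eq_single j (fun i hi hij => ?_) (absurd hj), coeff_C_mul_X_pow,
    if_pos rfl]
  rw [coeff_C_mul_X_pow, if_neg fun h => hij (he hi hj h.symm)]

variable {K : Type*} [Field K] {f : K[X][X]}

theorem exists_monic_irreducible_dvd_eval_not_dvd (hf : 0 < f.natDegree) (h0 : f.coeff 0 ≠ 0)
    {P : K[X]} (hP : P ≠ 0) :
    ∃ Q : K[X], Q.Monic ∧ Irreducible Q ∧ (∃ y, Q ∣ f.eval y) ∧ ¬Q ∣ P := by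
  set c := f.coeff 0
  obtain ⟨m, hm⟩ := exists_natDegree_coeff_lt f
  set y := c * (P * X ^ m)
  have hy : y.natDegree = c.natDegree + (P.natDegree + m) := by
    rw [natDegree_mul h0 (mul_ne_zero hP (pow_ne_zero _ X_ne_zero)),
      natDegree_mul hP (pow_ne_zero _ X_ne_zero), natDegree_X_pow]
  obtain ⟨s, hs⟩ : y ∣ f.eval y - c := by
    simpa only [c, coeff_zero_eq_eval_zero, sub_zero] using sub_dvd_eval_sub y 0 f
  set v := 1 + P * X ^ m * s
  have hfv : f.eval y = c * v := by
    simp only [y, v] at hs ⊢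
    linear_combination hs
  have hv : 0 < v.natDegree := by
    have hdeg := natDegree_eval_of_natDegree_coeff_lt f (y := y) fun i => by
      have := hm i
      omega
    have hle : (c * v).natDegree ≤ c.natDegree + v.natDegree := natDegree_mul_le
    have hm0 : c.natDegree < m := hm 0
    have hy_le : y.natDegree ≤ f.natDegree * y.natDegree := Nat.le_mul_of_pos_left _ hf
    rw [← hfv] at hle
    omega
  obtain ⟨Q, hQm, hQi, hQv⟩ := exists_monic_irreducible_factor v (not_isUnit_of_natDegree_pos v hv)
  refine ⟨Q, hQm, hQi, ⟨y, hfv ▸ dvd_mul_of_dvd_right hQv c⟩, fun hQP => hQi.not_isUnit ?_⟩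
  exact isUnit_of_dvd_one ((dvd_add_left ((hQP.mul_right _).mul_right s)).1 hQv)

theorem setOf_monic_irreducible_dvd_eval_infinite (hf : 0 < f.natDegree) (h0 : f.coeff 0 ≠ 0) :
    {Q : K[X] | Q.Monic ∧ Irreducible Q ∧ ∃ y, Q ∣ f.eval y}.Infinite := by
  intro hfin
  have hmonic : (∏ Q ∈ hfin.toFinset, Q).Monic :=
    monic_prod_of_monic _ _ fun Q hQ => (hfin.mem_toFinset.1 hQ).1
  obtain ⟨Q, hQm, hQi, hQy, hQP⟩ := exists_monic_irreducible_dvd_eval_not_dvd hf h0 hmonic.ne_zero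
  exact hQP (dvd_prod_of_mem _ (hfin.mem_toFinset.2 ⟨hQm, hQi, hQy⟩))

end Polynomial

theorem stmt_9_general (p : ℕ) [Fact p.Prime] {F : Type*} [Field F]
    (k : ℕ) (hk : 1 ≤ k) (a : ℕ → Polynomial F) (hak : a k ≠ 0) (ha0 : a 0 ≠ 0) :
    {Q : Polynomial F | Q.Monic ∧ Irreducible Q ∧
      ∃ y : Polynomial F, Q ∣ Polynomial.eval y
        (Polynomial.C (a 0) +
          ∑ i ∈ Finset.Icc 1 k, Polynomial.C (a i) * Polynomial.X ^ (p ^ i - 1))}.Infinite := by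
  have hp := (Fact.out : p.Prime).one_lt
  have hexp_ne_zero : ∀ i ∈ Icc 1 k, p ^ i - 1 ≠ 0 := fun i hi =>
    Nat.sub_ne_zero_of_lt (Nat.one_lt_pow (Nat.one_le_iff_ne_zero.1 (mem_Icc.1 hi).1) hp)
  have hinj : Set.InjOn (fun i => p ^ i - 1) (Icc 1 k : Set ℕ) := fun i _ j _ h =>
    Nat.pow_right_injective hp (Nat.sub_one_cancel (by positivity) (by positivity) h)
  have hkk : k ∈ Icc 1 k := mem_Icc.2 ⟨hk, le_rfl⟩
  set g : F[X][X] := C (a 0) + ∑ i ∈ Icc 1 k, C (a i) * X ^ (p ^ i - 1)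
  have hg_top : g.coeff (p ^ k - 1) = a k := by
    rw [coeff_add, coeff_C, if_neg (hexp_ne_zero k hkk), zero_add,
      coeff_sum_C_mul_X_pow_of_injOn hinj a hkk]
  have hg_zero : g.coeff 0 = a 0 := by
    rw [coeff_add, coeff_C_zero, finsetSum_coeff, add_eq_left]
    exact sum_eq_zero fun i hi => by rw [coeff_C_mul_X_pow, if_neg (hexp_ne_zero i hi).symm]
  exact setOf_monic_irreducible_dvd_eval_infinite
    ((Nat.pos_of_ne_zero (hexp_ne_zero k hkk)).trans_le (le_natDegree_of_ne_zero (hg_top ▸ hak)))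
    (hg_zero ▸ ha0)

theorem stmt_9 (p : ℕ) [Fact p.Prime] {F : Type*} [Field F] [Fintype F] [CharP F p]
    (k : ℕ) (hk : 1 ≤ k) (a : ℕ → Polynomial F) (hak : a k ≠ 0) (ha0 : a 0 ≠ 0) :
    {Q : Polynomial F | Q.Monic ∧ Irreducible Q ∧
      ∃ y : Polynomial F, Q ∣ Polynomial.eval y
        (Polynomial.C (a 0) +
          ∑ i ∈ Finset.Icc 1 k, Polynomial.C (a i) * Polynomial.X ^ (p ^ i - 1))}.Infinite :=
  stmt_9_general p k hk a hak ha0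
end

section
/- Let F be a finite field of characteristic p and let η(y) = ∑_{i=0}^k a_i y^{p^i} ∈ (F[t])[y] be an additive polynomial with k ≥ 1 and a_k ≠ 0. Then there exist infinitely many monic Q ∈ F[t] (with lpf(Q) arbitrarily large) such that the induced additive map η : F[t]/(Q) → F[t]/(Q) is not surjective. -/
open Polynomial

section AdditivePoly

variable {R : Type*} [Semiring R]

noncomputable def additivePoly (p k : ℕ) (a : ℕ → R) : R[X] :=
  ∑ i ∈ Finset.range (k + 1), C (a i) * X ^ p ^ i

variable {p : ℕ} (k : ℕ) (a : ℕ → R)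

theorem additivePoly_eval_zero (hp : p ≠ 0) : (additivePoly p k a).eval 0 = 0 := by
  simp [additivePoly, eval_finsetSum, hp]

theorem coeff_additivePoly_pow (hp : 1 < p) {j : ℕ} (hj : j ≤ k) :
    (additivePoly p k a).coeff (p ^ j) = a j := by
  simp only [additivePoly, finsetSum_coeff, coeff_C_mul_X_pow,
    (Nat.pow_right_injective hp).eq_iff]
  simp [Nat.lt_succ_of_le hj]

theorem eval_zero_divX_additivePoly (hp : 1 < p) : (divX (additivePoly p k a)).eval 0 = a 0 := by
  rw [← coeff_zero_eq_eval_zero, coeff_divX, zero_add, ← pow_zero p,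
    coeff_additivePoly_pow k a hp k.zero_le]

theorem natDegree_divX_additivePoly_pos (hp : 1 < p) (hk : k ≠ 0) (hak : a k ≠ 0) :
    0 < (divX (additivePoly p k a)).natDegree := by
  have hpk : 1 < p ^ k := Nat.one_lt_pow hk hp
  refine (Nat.sub_pos_of_lt hpk).trans_le (le_natDegree_of_ne_zero ?_)
  rwa [coeff_divX, Nat.sub_add_cancel hpk.le, coeff_additivePoly_pow k a hp le_rfl]

end AdditivePoly

theorem eval_eq_mul_eval_divX {R : Type*} [CommSemiring R] {η : R[X]} (hη : η.eval 0 = 0)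
    (h : R) : η.eval h = h * (divX η).eval h := by
  conv_lhs => rw [← X_mul_divX_add η, coeff_zero_eq_eval_zero, hη]
  simp

theorem lpf_pow_of_irreducible {F : Type*} [Field F] [Fintype F] {P : F[X]} (hm : P.Monic)
    (hi : Irreducible P) {j : ℕ} (hj : j ≠ 0) : lpf (P ^ j) = Fintype.card F ^ P.natDegree := by
  suffices h : {n : ℕ | ∃ P' : F[X], P'.Monic ∧ Irreducible P' ∧ P' ∣ P ^ j ∧
      n = Fintype.card F ^ P'.natDegree} = {Fintype.card F ^ P.natDegree} by
    rw [lpf, h, csInf_singleton]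
  ext n
  refine ⟨?_, fun hn => ⟨P, hm, hi, dvd_pow_self P hj, hn⟩⟩
  rintro ⟨P', hm', hi', hdvd, rfl⟩
  rw [eq_of_monic_of_associated hm' hm (hi'.associated_of_dvd hi (hi'.prime.dvd_of_dvd_pow hdvd))]
  rfl

theorem not_surjective_aeval_of_eval_mem {R : Type*} [CommRing R] (I : Ideal R) [Finite (R ⧸ I)]
    {η : R[X]} (hη : η.eval 0 = 0) {h : R} (hηh : η.eval h ∈ I) (hh : h ∉ I) :
    ¬Function.Surjective fun x : R ⧸ I => aeval x η := by
  have aeval_mk (r : R) : aeval (Ideal.Quotient.mk I r) η = Ideal.Quotient.mk I (η.eval r) :=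
    eval₂_hom _ r
  intro hsurj
  have hinj := Finite.injective_iff_surjective.mpr hsurj
  refine hh (Ideal.Quotient.eq_zero_iff_mem.mp (hinj ?_))
  simp only [← map_zero (Ideal.Quotient.mk I), aeval_mk, hη, Ideal.Quotient.eq_zero_iff_mem.mpr hηh]

theorem exists_monic_le_lpf_not_surjective {F : Type*} [Field F] [Fintype F] {η : F[X][X]}
    (hη : η.eval 0 = 0) {N : ℕ} {P : F[X]} (hm : P.Monic) (hi : Irreducible P)
    (hN : N < P.natDegree) {j : ℕ} (hj : j ≠ 0) {h : F[X]} (hηh : P ^ j ∣ η.eval h)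
    (hh : ¬P ^ j ∣ h) :
    ∃ Q : F[X], Q.Monic ∧ N ≤ lpf Q ∧
      ¬Function.Surjective fun x : F[X] ⧸ Ideal.span {Q} => aeval x η := by
  have := (hm.pow j).finite_quotient
  have : Finite (F[X] ⧸ Ideal.span {P ^ j}) := Module.finite_of_finite F
  refine ⟨P ^ j, hm.pow j, ?_, not_surjective_aeval_of_eval_mem _ hη
    (Ideal.mem_span_singleton.mpr hηh) (mt Ideal.mem_span_singleton.mp hh)⟩
  rw [lpf_pow_of_irreducible hm hi hj]
  exact (Nat.lt_pow_self Fintype.one_lt_card).le.trans (Nat.pow_le_pow_right Fintype.card_pos hN.le)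

theorem exists_eval_eq_mul_one_add_mul {R : Type*} [CommRing R] [IsDomain R] [Infinite R]
    {G : R[X]} (hG : 0 < G.natDegree) (hc : G.eval 0 ≠ 0) {D : R} (hD : D ≠ 0) :
    ∃ h v : R, v ≠ 0 ∧ IsCoprime (1 + D * v) h ∧ G.eval h = G.eval 0 * (1 + D * v) := by
  set c := G.eval 0
  obtain ⟨s, hs⟩ : ∃ s : R, G.eval (c * c * D * s) ≠ c := by
    by_contra! hall
    have hcomp : (G - C c).comp (C (c * c * D) * X) = 0 :=
      Polynomial.funext fun s => by simp [hall]
    have := congrArg natDegree hcomp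
    rw [natDegree_comp, natDegree_C_mul_X _ (by simp [hc, hD]), natDegree_sub_C,
      natDegree_zero] at this
    omega
  set g := c * D * s
  rw [show c * c * D * s = c * g by ring] at hs
  obtain ⟨V, hV⟩ : c * g ∣ G.eval (c * g) - c := by simpa using sub_dvd_eval_sub (c * g) 0 G
  have hGcg : G.eval (c * g) = c * (1 + g * V) := by linear_combination hV
  refine ⟨c * g, c * s * V, fun hv => hs ?_, ?_, ?_⟩
  · simp only [hGcg, g]
    linear_combination c * D * hv
  · rw [show 1 + D * (c * s * V) = 1 + g * V by ring]
    refine IsCoprime.mul_right ?_ (isCoprime_one_left.add_mul_left_left V)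
    rw [show 1 + g * V = 1 + c * (D * s * V) by ring]
    exact isCoprime_one_left.add_mul_left_left _
  · rw [hGcg]
    ring

theorem exists_monic_irreducible_dvd_one_add_mul {F : Type*} [Field F] [Finite F] (N : ℕ)
    {v : F[X]} (hv : v ≠ 0) :
    ∃ P : F[X], P.Monic ∧ Irreducible P ∧ P ∣ 1 + (X ^ Nat.card F ^ N.factorial - X) * v ∧
      N < P.natDegree := by
  set D : F[X] := X ^ Nat.card F ^ N.factorial - X
  have hD : 0 < D.natDegree := by
    rw [FiniteField.X_pow_card_pow_sub_X_natDegree_eq _ N.factorial_ne_zero Finite.one_lt_card]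
    exact pow_pos Finite.card_pos _
  have hw : ¬IsUnit (1 + D * v) := by
    refine not_isUnit_of_natDegree_pos _ ?_
    rw [natDegree_add_eq_right_of_natDegree_lt] <;>
      simp [natDegree_mul (ne_zero_of_natDegree_gt hD) hv] <;> omega
  obtain ⟨P, hm, hi, hPw⟩ := exists_monic_irreducible_factor _ hw
  refine ⟨P, hm, hi, hPw, not_le.mp fun hle => hi.not_isUnit ?_⟩
  have hPD : P ∣ D :=
    (hi.natDegree_dvd_iff_dvd_X_pow_card_pow_sub_X).mp (Nat.dvd_factorial hi.natDegree_pos hle)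
  exact isUnit_of_dvd_one (by simpa using dvd_sub hPw (hPD.mul_right v))

theorem stmt_10_general (p : ℕ) [Fact p.Prime] {F : Type*} [Field F] [Fintype F]
    (k : ℕ) (hk : 1 ≤ k) (a : ℕ → Polynomial F) (hak : a k ≠ 0) :
    ∀ N : ℕ, ∃ Q : Polynomial F, Q.Monic ∧ N ≤ lpf Q ∧
      ¬ Function.Surjective (fun x : Polynomial F ⧸ Ideal.span {Q} =>
        Polynomial.aeval x
          (∑ i ∈ Finset.range (k + 1), Polynomial.C (a i) * Polynomial.X ^ p ^ i)) := by
  intro N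
  have hp : 1 < p := (Fact.out : p.Prime).one_lt
  have hη0 : (additivePoly p k a).eval 0 = 0 := additivePoly_eval_zero k a (by omega)
  have hG0 := eval_zero_divX_additivePoly k a hp
  by_cases ha0 : a 0 = 0
  · obtain ⟨P, hm, hi, -, hN⟩ := exists_monic_irreducible_dvd_one_add_mul (F := F) N one_ne_zero
    refine exists_monic_le_lpf_not_surjective hη0 hm hi hN two_ne_zero (h := P) ?_ fun hPP =>
      hi.not_isUnit (isUnit_of_dvd_one ?_)
    · rw [eval_eq_mul_eval_divX hη0, pow_two]
      refine mul_dvd_mul_left P ?_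
      simpa [hG0, ha0] using sub_dvd_eval_sub P 0 (divX (additivePoly p k a))
    · rwa [← mul_dvd_mul_iff_left hi.ne_zero, mul_one, ← pow_two]
  · have hD := FiniteField.X_pow_card_pow_sub_X_ne_zero F N.factorial_ne_zero
      (Finite.one_lt_card (α := F))
    obtain ⟨h, v, hv, hcop, hGh⟩ := exists_eval_eq_mul_one_add_mul
      (natDegree_divX_additivePoly_pos k a hp (by omega) hak) (hG0 ▸ ha0) hD
    obtain ⟨P, hm, hi, hPw, hN⟩ := exists_monic_irreducible_dvd_one_add_mul N hv
    refine exists_monic_le_lpf_not_surjective hη0 hm hi hN one_ne_zero (h := h) ?_ fun hPh =>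
      hi.not_isUnit (hcop.isUnit_of_dvd' hPw (by rwa [pow_one] at hPh))
    rw [pow_one, eval_eq_mul_eval_divX hη0, hGh]
    exact (hPw.mul_left _).mul_left h

theorem stmt_10 (p : ℕ) [Fact p.Prime] {F : Type*} [Field F] [Fintype F] [CharP F p]
    (k : ℕ) (hk : 1 ≤ k) (a : ℕ → Polynomial F) (hak : a k ≠ 0) :
    ∀ N : ℕ, ∃ Q : Polynomial F, Q.Monic ∧ N ≤ lpf Q ∧
      ¬ Function.Surjective (fun x : Polynomial F ⧸ Ideal.span {Q} =>
        Polynomial.aeval x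
          (∑ i ∈ Finset.range (k + 1), Polynomial.C (a i) * Polynomial.X ^ p ^ i)) :=
  stmt_10_general p k hk a hak
end

section
/- Let F be a finite field and Q ∈ F[t] monic. Suppose P(y) ∈ (F[t])[y] is a polynomial and H_Q ≤ (F[t]/(Q), +) is a subgroup containing P(y) − P(0) for every y ∈ F[t]/(Q). Let A ⊆ F[t]/(Q) be a union of cosets of H_Q and set B = (F[t]/(Q)) \ (A + P(0)). Then for all x ∈ A and all y ∈ F[t]/(Q), x + P(y) ∉ B. Moreover, if H_Q has index p^k ≥ 2, one can choose A with |A|/|Q| ≥ 1/3 and then |B|/|Q| ≥ 1/2. -/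
lemma aux_13 {G : Type*} [AddCommGroup G] [Fintype G] (H : AddSubgroup G) (c : G)
    (n : ℕ) (hn : H.index = n) (h2 : 2 ≤ n) :
    ∃ A : Set G, (∀ x ∈ A, ∀ h ∈ H, x + h ∈ A) ∧
      (1 / 3 : ℝ) ≤ (Nat.card A : ℝ) / (Fintype.card G : ℝ) ∧
      (1 / 2 : ℝ) ≤ (Nat.card {z : G | z ∉ (fun a => a + c) '' A} : ℝ) /
        (Fintype.card G : ℝ) := by
  set m := n / 2 with hm
  obtain ⟨S, -, hS⟩ := Set.exists_subset_card_eq (s := (Set.univ : Set (G ⧸ H))) (n := m) (by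
    rw [Set.ncard_univ, AddSubgroup.index] at *; omega)
  refine ⟨(QuotientAddGroup.mk : G → G ⧸ H) ⁻¹' S, ?_, ?_⟩
  · intro x hx h hh
    have : (QuotientAddGroup.mk (x + h) : G ⧸ H) = QuotientAddGroup.mk x := by
      rw [QuotientAddGroup.eq_iff_sub_mem]
      simpa using hh
    simpa [Set.mem_preimage, this] using hx
  set A := (QuotientAddGroup.mk : G → G ⧸ H) ⁻¹' S with hA
  have hcardA : Nat.card A = Nat.card H * m := by
    rw [hA, Nat.card_congr (QuotientAddGroup.preimageMkEquivAddSubgroupProdSet H S),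
      Nat.card_prod, Nat.card_coe_set_eq, hS]
  have hq : Nat.card H * n = Fintype.card G := by
    rw [← hn, AddSubgroup.card_mul_index, Nat.card_eq_fintype_card]
  have hH1 : 1 ≤ Nat.card H := Nat.card_pos
  have hAle : Nat.card A ≤ Fintype.card G := by
    rw [hcardA, ← hq]
    exact Nat.mul_le_mul_left _ (by omega)
  have hcardC : Nat.card {z : G | z ∉ (fun a => a + c) '' A} = Fintype.card G - Nat.card A := by
    have himg : ((fun a => a + c) '' A).ncard = A.ncard :=
      Set.ncard_image_of_injective _ (add_left_injective c)
    have : {z : G | z ∉ (fun a => a + c) '' A} = ((fun a => a + c) '' A)ᶜ := rfl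
    rw [this, Nat.card_coe_set_eq]
    have hcompl := Set.ncard_add_ncard_compl ((fun a => a + c) '' A)
    rw [himg] at hcompl
    rw [Nat.card_eq_fintype_card] at hcompl
    rw [Nat.card_coe_set_eq] at *
    omega
  have hqpos : (0 : ℝ) < (Fintype.card G : ℝ) := by positivity
  have h3 : n ≤ 3 * m := by omega
  have h2' : 2 * m ≤ n := by omega
  constructor
  · rw [div_le_div_iff₀ (by norm_num) hqpos, hcardA, ← hq]
    push_cast
    have hc1 : (Nat.card H : ℝ) * n ≤ (Nat.card H : ℝ) * (3 * m) := by
      exact_mod_cast Nat.mul_le_mul_left (Nat.card H) h3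
    nlinarith
  · rw [div_le_div_iff₀ (by norm_num) hqpos, hcardC]
    rw [Nat.cast_sub hAle]
    push_cast
    have key : (Nat.card A : ℝ) * 2 ≤ (Fintype.card G : ℝ) := by
      rw [hcardA, ← hq]
      push_cast
      have hc2 : (Nat.card H : ℝ) * (2 * m) ≤ (Nat.card H : ℝ) * n := by
        exact_mod_cast Nat.mul_le_mul_left (Nat.card H) h2'
      nlinarith
    linarith

theorem stmt_13 {F : Type*} [Field F] [Fintype F] (p : ℕ) [Fact p.Prime] [CharP F p]
    (Q : Polynomial F) (hQ : Q.Monic)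
    [Fintype (Polynomial F ⧸ Ideal.span {Q})]
    (P : Polynomial (Polynomial F))
    (H : AddSubgroup (Polynomial F ⧸ Ideal.span {Q}))
    (hH : ∀ y : Polynomial F ⧸ Ideal.span {Q},
      Polynomial.aeval y P - Polynomial.aeval (0 : Polynomial F ⧸ Ideal.span {Q}) P ∈ H) :
    (∀ A : Set (Polynomial F ⧸ Ideal.span {Q}),
      (∀ x ∈ A, ∀ h ∈ H, x + h ∈ A) →
      ∀ x ∈ A, ∀ y : Polynomial F ⧸ Ideal.span {Q},
        x + Polynomial.aeval y P ∉
          {z : Polynomial F ⧸ Ideal.span {Q} |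
            z ∉ (fun a => a + Polynomial.aeval (0 : Polynomial F ⧸ Ideal.span {Q}) P) '' A}) ∧
    (∀ kk : ℕ, H.index = p ^ kk → 2 ≤ p ^ kk →
      ∃ A : Set (Polynomial F ⧸ Ideal.span {Q}),
        (∀ x ∈ A, ∀ h ∈ H, x + h ∈ A) ∧
        (1 / 3 : ℝ) ≤ (Nat.card A : ℝ) /
          (Fintype.card (Polynomial F ⧸ Ideal.span {Q}) : ℝ) ∧
        (1 / 2 : ℝ) ≤ (Nat.card {z : Polynomial F ⧸ Ideal.span {Q} |
            z ∉ (fun a => a + Polynomial.aeval (0 : Polynomial F ⧸ Ideal.span {Q}) P) '' A} : ℝ) /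
          (Fintype.card (Polynomial F ⧸ Ideal.span {Q}) : ℝ)) := by
  constructor
  · intro A hclosed x hx y
    simp only [Set.mem_setOf_eq, not_not]
    exact ⟨x + (Polynomial.aeval y P - Polynomial.aeval 0 P),
      hclosed x hx _ (hH y), by ring⟩
  · intro kk hidx h2
    exact aux_13 H _ (p ^ kk) hidx h2
end

section
/- Let G be a finite abelian group and P : G → G a function. Suppose H ≤ G is a subgroup with {P(y) − a₀ : y ∈ G} ⊆ H for some a₀ ∈ G, and suppose that for some constant ε ≥ 0 we have, for all f : G → ℂ, ‖𝔼_{y∈G} f(x+P(y)) − 𝔼_{z∈H} f(x+a₀+z)‖_{L²(G)} ≤ ε·‖f‖_{L²(G)}. If additionally −a₀ ∈ H (e.g., P has a root in G), then for any A ⊆ G containing no distinct a, b with b − a ∈ P(G), we have (|A|/|G|)² ≤ (|A|/|G|)·(ε + |{y ∈ G : P(y)=0}|/|G|). -/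
/-!
Let `g = 𝟙_A`, `α = |A|/|G|`, `T g x = 𝔼_y g (x + P y)` and `S g x = 𝔼_{z ∈ H} g (x + z)`; since
`a₀ ∈ H`, the hypothesis bounds `‖T g - S g‖₂` by `ε ‖g‖₂`. Averaging over `H` is an orthogonal
projection, so `⟨g, S g⟩ = ‖S g‖₂² ≥ (𝔼 g)² = α²`. Since `A` has no pattern, `x, x + P y ∈ A` forces
`P y = 0`, so `⟨g, T g⟩ ≤ α · |P⁻¹(0)|/|G|`. Cauchy–Schwarz gives `|⟨g, T g - S g⟩| ≤ ε ‖g‖₂² = ε α`,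
and the three bounds combine to `α² ≤ α (ε + |P⁻¹(0)|/|G|)`.
-/

open Finset

namespace AddSubgroup

variable {G : Type*} [AddCommGroup G] (H : AddSubgroup G) [Fintype H]

lemma sum_add_coe_eq_of_mem (f : G → ℝ) {a : G} (ha : a ∈ H) (x : G) :
    ∑ z : H, f (x + a + z) = ∑ z : H, f (x + z) :=
  Fintype.sum_equiv (Equiv.addLeft ⟨a, ha⟩) _ _ fun z => by
    simp only [Equiv.coe_addLeft, AddSubgroup.coe_add, add_assoc]

variable [Fintype G]

lemma sum_sum_add_coe (f : G → ℝ) : ∑ x, ∑ z : H, f (x + z) = Fintype.card H * ∑ x, f x := by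
  rw [Finset.sum_comm, Finset.sum_congr rfl fun (z : H) _ =>
      Fintype.sum_equiv (Equiv.addRight (z : G)) (fun x => f (x + z)) f fun _ => rfl,
    Finset.sum_const, Finset.card_univ, nsmul_eq_mul]

lemma sq_sum_le_card_mul_sum_mul_sum_add (f : G → ℝ) :
    (∑ x, f x) ^ 2 ≤ Fintype.card G * ∑ x, f x * ((∑ z : H, f (x + z)) / Fintype.card H) := by
  set S : G → ℝ := fun x => ∑ z : H, f (x + z)
  have hH : (0 : ℝ) < Fintype.card H := by exact_mod_cast Fintype.card_pos
  have hS_periodic : ∀ (x : G) (z : H), S (x + z) = S x := fun x z =>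
    Fintype.sum_equiv (Equiv.addLeft z) _ _ fun w => by
      simp only [Equiv.coe_addLeft, AddSubgroup.coe_add, add_assoc]
  have hS_sum : ∑ x, S x = Fintype.card H * ∑ x, f x := sum_sum_add_coe H f
  have hS_sq : ∑ x, S x ^ 2 = Fintype.card H * ∑ x, f x * S x := by
    calc ∑ x, S x ^ 2 = ∑ x, ∑ z : H, f (x + z) * S (x + z) := by
          refine Finset.sum_congr rfl fun x _ => ?_
          simp only [hS_periodic, ← Finset.sum_mul, sq]
          rfl
      _ = _ := sum_sum_add_coe H fun y => f y * S y
  have hCS : (∑ x, S x) ^ 2 ≤ Fintype.card G * ∑ x, S x ^ 2 := by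
    simpa using sq_sum_le_card_mul_sum_sq (s := Finset.univ) (f := S)
  rw [hS_sum, hS_sq, mul_pow, sq (Fintype.card H : ℝ), mul_left_comm, mul_assoc] at hCS
  simp only [mul_div_assoc', ← Finset.sum_div]
  rw [le_div_iff₀ hH, mul_comm]
  exact le_of_mul_le_mul_left hCS hH

end AddSubgroup

section PatternFree

variable {G : Type*} [AddCommGroup G] [Fintype G] [DecidableEq G] {P : G → G} {A : Finset G}

lemma card_filter_add_mem_le_card_filter_eq_zero
    (hA : ∀ a ∈ A, ∀ b ∈ A, a ≠ b → ¬ ∃ y : G, b - a = P y) {x : G} (hx : x ∈ A) :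
    #{y | x + P y ∈ A} ≤ #{y | P y = 0} := by
  refine Finset.card_le_card fun y hy => ?_
  simp only [Finset.mem_filter, Finset.mem_univ, true_and] at hy ⊢
  by_contra hPy
  exact hA x hx _ hy (by simpa using hPy) ⟨y, by abel⟩

lemma sum_indicator_mul_sum_indicator_add_le
    (hA : ∀ a ∈ A, ∀ b ∈ A, a ≠ b → ¬ ∃ y : G, b - a = P y) :
    ∑ x, (A : Set G).indicator 1 x * ∑ y, (A : Set G).indicator (1 : G → ℝ) (x + P y) ≤
      #A * #{y | P y = 0} := by
  simp only [Set.indicator_apply, Finset.mem_coe, Pi.one_apply, ite_mul, one_mul, zero_mul,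
    Finset.sum_ite_mem, Finset.univ_inter, Finset.sum_boole]
  calc ∑ x ∈ A, (#{y | x + P y ∈ A} : ℝ) ≤ ∑ _x ∈ A, (#{y | P y = 0} : ℝ) :=
        Finset.sum_le_sum fun x hx => by
          exact_mod_cast card_filter_add_mem_le_card_filter_eq_zero hA hx
    _ = _ := by rw [Finset.sum_const, nsmul_eq_mul]

end PatternFree

lemma abs_sum_mul_le_of_sqrt_sum_sq_le {ι : Type*} [Fintype ι] {u v : ι → ℝ} {c ε : ℝ}
    (hc : 0 < c) (h : √((∑ i, v i ^ 2) / c) ≤ ε * √((∑ i, u i ^ 2) / c)) :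
    |∑ i, u i * v i| ≤ ε * ∑ i, u i ^ 2 := by
  have hsqrt : √(∑ i, v i ^ 2) ≤ ε * √(∑ i, u i ^ 2) := by
    rw [Real.sqrt_div' _ hc.le, Real.sqrt_div' _ hc.le, mul_div_assoc',
      div_le_div_iff_of_pos_right (Real.sqrt_pos.mpr hc)] at h
    exact h
  have hcs : ∀ w : ι → ℝ, (∀ i, w i ^ 2 = v i ^ 2) → ∑ i, u i * w i ≤ ε * ∑ i, u i ^ 2 := by
    intro w hw
    calc ∑ i, u i * w i ≤ √(∑ i, u i ^ 2) * √(∑ i, w i ^ 2) := Real.sum_mul_le_sqrt_mul_sqrt _ _ _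
      _ ≤ √(∑ i, u i ^ 2) * (ε * √(∑ i, u i ^ 2)) := by
          simp only [hw]; exact mul_le_mul_of_nonneg_left hsqrt (Real.sqrt_nonneg _)
      _ = ε * ∑ i, u i ^ 2 := by
          rw [mul_left_comm, Real.mul_self_sqrt (by positivity)]
  refine abs_le.mpr ⟨?_, hcs v fun _ => rfl⟩
  have := hcs (fun i => -v i) fun _ => neg_sq _
  simp only [mul_neg, Finset.sum_neg_distrib] at this
  linarith

theorem stmt_14_general {G : Type*} [AddCommGroup G] [Fintype G] [DecidableEq G]
    (P : G → G) (H : AddSubgroup G) [Fintype H] (a₀ : G)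
    (ε : ℝ)
    (hest : ∀ f : G → ℂ,
      Real.sqrt ((∑ x : G, ‖(∑ y : G, f (x + P y)) / (Fintype.card G : ℂ) -
          (∑ z : H, f (x + a₀ + (z : G))) / (Fintype.card H : ℂ)‖ ^ 2) /
        (Fintype.card G : ℝ)) ≤
      ε * Real.sqrt ((∑ x : G, ‖f x‖ ^ 2) / (Fintype.card G : ℝ)))
    (ha : -a₀ ∈ H)
    (A : Finset G)
    (hA : ∀ a ∈ A, ∀ b ∈ A, a ≠ b → ¬ ∃ y : G, b - a = P y) :
    ((A.card : ℝ) / (Fintype.card G : ℝ)) ^ 2 ≤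
      ((A.card : ℝ) / (Fintype.card G : ℝ)) *
        (ε + ((Finset.univ.filter fun y : G => P y = 0).card : ℝ) /
          (Fintype.card G : ℝ)) := by
  set g : G → ℝ := (A : Set G).indicator 1
  have hn : (0 : ℝ) < Fintype.card G := by exact_mod_cast Fintype.card_pos
  have hg_sum : ∑ x, g x = #A := by simp [g, Set.indicator_apply]
  have hg_sq : ∑ x, g x ^ 2 = #A := by simp [g, Set.indicator_apply]
  have hreal := hest fun x => (g x : ℂ)
  simp only [← Complex.ofReal_sum, ← Complex.ofReal_natCast, ← Complex.ofReal_div,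
    ← Complex.ofReal_sub, Complex.norm_real, Real.norm_eq_abs, sq_abs,
    H.sum_add_coe_eq_of_mem g (by simpa using H.neg_mem ha)] at hreal
  have herr := (abs_le.mp (abs_sum_mul_le_of_sqrt_sum_sq_le hn hreal)).1
  simp only [mul_sub, Finset.sum_sub_distrib, hg_sq] at herr
  have hlow := H.sq_sum_le_card_mul_sum_mul_sum_add g
  rw [hg_sum] at hlow
  have hup := sum_indicator_mul_sum_indicator_add_le (P := P) hA
  have hkey : (#A : ℝ) ^ 2 ≤ #A * #{y | P y = 0} + ε * #A * Fintype.card G := by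
    calc (#A : ℝ) ^ 2 ≤ Fintype.card G * ∑ x, g x * ((∑ z : H, g (x + z)) / Fintype.card H) :=
          hlow
      _ ≤ Fintype.card G * (∑ x, g x * ((∑ y, g (x + P y)) / Fintype.card G) + ε * #A) := by
          gcongr; linarith
      _ = ∑ x, g x * ∑ y, g (x + P y) + ε * #A * Fintype.card G := by
          simp only [mul_div_assoc', ← Finset.sum_div]; field_simp
      _ ≤ _ := by gcongr
  calc ((#A : ℝ) / Fintype.card G) ^ 2 = (#A : ℝ) ^ 2 / (Fintype.card G) ^ 2 := div_pow _ _ _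
    _ ≤ (#A * #{y | P y = 0} + ε * #A * Fintype.card G) / (Fintype.card G) ^ 2 := by gcongr
    _ = _ := by field_simp; ring

theorem stmt_14 {G : Type*} [AddCommGroup G] [Fintype G] [DecidableEq G]
    (P : G → G) (H : AddSubgroup G) [Fintype H] (a₀ : G)
    (hP : ∀ y : G, P y - a₀ ∈ H) (ε : ℝ) (hε : 0 ≤ ε)
    (hest : ∀ f : G → ℂ,
      Real.sqrt ((∑ x : G, ‖(∑ y : G, f (x + P y)) / (Fintype.card G : ℂ) -
          (∑ z : H, f (x + a₀ + (z : G))) / (Fintype.card H : ℂ)‖ ^ 2) /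
        (Fintype.card G : ℝ)) ≤
      ε * Real.sqrt ((∑ x : G, ‖f x‖ ^ 2) / (Fintype.card G : ℝ)))
    (ha : -a₀ ∈ H)
    (A : Finset G)
    (hA : ∀ a ∈ A, ∀ b ∈ A, a ≠ b → ¬ ∃ y : G, b - a = P y) :
    ((A.card : ℝ) / (Fintype.card G : ℝ)) ^ 2 ≤
      ((A.card : ℝ) / (Fintype.card G : ℝ)) *
        (ε + ((Finset.univ.filter fun y : G => P y = 0).card : ℝ) /
          (Fintype.card G : ℝ)) :=
  stmt_14_general P H a₀ ε hest ha A hA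
end
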